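/- (Lemma 4) The composition of polyphase anchoring with global subsampled attention is general shift-equivariant: fix s, H, W, d, d_k, d_v ≥ 1, a query matrix W_q : Matrix (Fin d) (Fin d_k) ℝ, matrix-valued kernels Φ_K : G → Matrix (Fin d) (Fin d_k) ℝ and Φ_V : G → Matrix (Fin d) (Fin d_v) ℝ (G = ZMod (s·H) × ZMod (s·W)), and X : G → EuclideanSpace ℝ (Fin d) whose polyphase norms have a unique maximizer. Then for every (u,v) ∈ G there exists (u',v') ∈ G such that A_g(P(shift_{(u,v)} X)) = shift_{(u',v')} (A_g(P X)). -/

import Mathlib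

open Matrix
noncomputable section
/-- Circular shift of a 2D signal `X : ZMod M × ZMod N → α` by `(u,v)`:
`(shift_{(u,v)} X)(i,j) = X (i-u, j-v)`. -/
def cshift2 {M N : ℕ} {α : Type*} (uv : ZMod M × ZMod N)
    (X : ZMod M × ZMod N → α) : ZMod M × ZMod N → α :=
  fun ij => X (ij.1 - uv.1, ij.2 - uv.2)
/-- Softmax of a score vector over a finite index type:
`softmax a i = exp (a i) / ∑ j, exp (a j)`. -/
def softmax {ι : Type*} [Fintype ι] (a : ι → ℝ) : ι → ℝ :=
  fun i => Real.exp (a i) / ∑ j, Real.exp (a j)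
/-- The group homomorphism `ι_s : ZMod H → ZMod (s·H)`, `k ↦ s·k`. -/
def iotaS (s : ℕ) {H : ℕ} (k : ZMod H) : ZMod (s * H) :=
  (s : ZMod (s * H)) * ((k.val : ℕ) : ZMod (s * H))
/-- Residue of a grid point of `ZMod (s·H) × ZMod (s·W)` modulo `s` in each coordinate. -/
def resPh (s : ℕ) {H W : ℕ} (ij : ZMod (s * H) × ZMod (s * W)) : ZMod s × ZMod s :=
  (ZMod.castHom (dvd_mul_right s H) (ZMod s) ij.1,
   ZMod.castHom (dvd_mul_right s W) (ZMod s) ij.2)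

/-- Polyphase norm `N_{pq}(X) = ∑ over grid points with residue `(p,q)` of `‖X(i,j)‖²`. -/
def polyNorm (s : ℕ) {H W C : ℕ} [NeZero (s * H)] [NeZero (s * W)]
    (X : ZMod (s * H) × ZMod (s * W) → EuclideanSpace ℝ (Fin C))
    (pq : ZMod s × ZMod s) : ℝ :=
  ∑ ij : ZMod (s * H) × ZMod (s * W), if resPh s ij = pq then ‖X ij‖ ^ 2 else 0

/-- The polyphase norms of `X` have a (unique) strict maximizer over `ZMod s × ZMod s`. -/
def HasUniqueMaxPhase (s : ℕ) {H W C : ℕ} [NeZero (s * H)] [NeZero (s * W)]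
    (X : ZMod (s * H) × ZMod (s * W) → EuclideanSpace ℝ (Fin C)) : Prop :=
  ∃ pq : ZMod s × ZMod s, ∀ pq' : ZMod s × ZMod s, pq' ≠ pq →
    polyNorm s X pq' < polyNorm s X pq

open Classical in
/-- The maximizing phase `(p̂,q̂)`, cast into the big grid via canonical representatives. -/
def anchorPhase (s : ℕ) {H W C : ℕ} [NeZero (s * H)] [NeZero (s * W)]
    (X : ZMod (s * H) × ZMod (s * W) → EuclideanSpace ℝ (Fin C)) :
    ZMod (s * H) × ZMod (s * W) :=
  if h : HasUniqueMaxPhase s X then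
    (((h.choose.1.val : ℕ) : ZMod (s * H)), ((h.choose.2.val : ℕ) : ZMod (s * W)))
  else (0, 0)

/-- Polyphase anchoring operator: `P X = shift_{(-p̂',-q̂')} X`, circularly shifting `X`
so that its maximizing polyphase aligns with the anchors. -/
def polyAnchor (s : ℕ) {H W C : ℕ} [NeZero (s * H)] [NeZero (s * W)]
    (X : ZMod (s * H) × ZMod (s * W) → EuclideanSpace ℝ (Fin C)) :
    ZMod (s * H) × ZMod (s * W) → EuclideanSpace ℝ (Fin C) :=
  cshift2 (-(anchorPhase s X).1, -(anchorPhase s X).2) X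
/-- Stride-`s` subsampled keys/values: `K_s(k,l) = ∑_{(a,b)} (Φ(a,b))ᵀ X(ι_s k + a, ι_s l + b)`. -/
def subsample (s : ℕ) {H W d m : ℕ} [NeZero (s * H)] [NeZero (s * W)]
    (Φ : ZMod (s * H) × ZMod (s * W) → Matrix (Fin d) (Fin m) ℝ)
    (X : ZMod (s * H) × ZMod (s * W) → (Fin d → ℝ)) :
    ZMod H × ZMod W → (Fin m → ℝ) :=
  fun kl => ∑ ab : ZMod (s * H) × ZMod (s * W),
    (Φ ab).transpose.mulVec (X (iotaS s kl.1 + ab.1, iotaS s kl.2 + ab.2))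

/-- Global subsampled attention (GSA): attention of each query against the stride-`s`
subsampled keys and values, with softmax over `ZMod H × ZMod W`. -/
def gsAttn (s : ℕ) {H W d dk dv : ℕ}
    [NeZero (s * H)] [NeZero (s * W)] [NeZero H] [NeZero W]
    (Wq : Matrix (Fin d) (Fin dk) ℝ)
    (ΦK : ZMod (s * H) × ZMod (s * W) → Matrix (Fin d) (Fin dk) ℝ)
    (ΦV : ZMod (s * H) × ZMod (s * W) → Matrix (Fin d) (Fin dv) ℝ)
    (X : ZMod (s * H) × ZMod (s * W) → (Fin d → ℝ)) :
    ZMod (s * H) × ZMod (s * W) → (Fin dv → ℝ) :=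
  fun ij => ∑ kl : ZMod H × ZMod W,
    softmax (fun kl' => Wq.transpose.mulVec (X ij) ⬝ᵥ subsample s ΦK X kl') kl
      • subsample s ΦV X kl

/-!
A circular shift by `uv` moves every polyphase norm by the residue of `uv` modulo `s`, so the
maximising phase moves by the same residue. After anchoring, `P (shift_{uv} X)` is therefore
`P X` shifted by a vector whose residue modulo `s` vanishes, i.e. by an element `ι_s k` of the
subsampling lattice. Such a shift only relabels the subsampled keys and values, and the softmax
attention is invariant under relabelling, so `A_g` commutes with it.
-/

lemma cshift2_cshift2 {M N : ℕ} {α : Type*} (a b : ZMod M × ZMod N) (X : ZMod M × ZMod N → α) :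
    cshift2 a (cshift2 b X) = cshift2 (a + b) X := by
  funext ij
  simp only [cshift2, Prod.fst_add, Prod.snd_add, sub_sub]

lemma softmax_comp_equiv {ι κ : Type*} [Fintype ι] [Fintype κ] (e : κ ≃ ι) (f : ι → ℝ)
    (k : κ) : softmax (f ∘ e) k = softmax f (e k) := by
  simp only [softmax, Function.comp_apply, Equiv.sum_comp e (fun i => Real.exp (f i))]

section Lattice

variable (s : ℕ) {H : ℕ}

lemma natCast_mul_mod (n : ℕ) : ((s * (n % H) : ℕ) : ZMod (s * H)) = (s * n : ℕ) := by
  rw [ZMod.natCast_eq_natCast_iff, ← Nat.mul_mod_mul_left]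
  exact Nat.mod_modEq _ _

lemma iotaS_add [NeZero H] (a b : ZMod H) : iotaS s (a + b) = iotaS s a + iotaS s b := by
  simp only [iotaS, ZMod.val_add, ← Nat.cast_mul, natCast_mul_mod, mul_add, Nat.cast_add]

lemma iotaS_sub [NeZero H] (a b : ZMod H) : iotaS s (a - b) = iotaS s a - iotaS s b := by
  rw [eq_sub_iff_add_eq, ← iotaS_add, sub_add_cancel]

lemma exists_iotaS_eq_of_cast_eq_zero [NeZero (s * H)] {t : ZMod (s * H)}
    (ht : ZMod.castHom (dvd_mul_right s H) (ZMod s) t = 0) : ∃ k : ZMod H, iotaS s k = t := by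
  rw [ZMod.castHom_apply, ZMod.cast_eq_val, ZMod.natCast_eq_zero_iff] at ht
  obtain ⟨m, hm⟩ := ht
  refine ⟨m, ?_⟩
  rw [iotaS, ZMod.val_natCast, ← Nat.cast_mul, natCast_mul_mod, ← hm, ZMod.natCast_val,
    ZMod.cast_id', id]

end Lattice

section Phase

variable (s : ℕ) {H W C : ℕ}

lemma resPh_add (a b : ZMod (s * H) × ZMod (s * W)) :
    resPh s (a + b) = resPh s a + resPh s b := by
  simp only [resPh, Prod.fst_add, Prod.snd_add, map_add, Prod.mk_add_mk]

lemma resPh_neg (a : ZMod (s * H) × ZMod (s * W)) : resPh s (-a) = -resPh s a := by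
  simp only [resPh, Prod.fst_neg, Prod.snd_neg, map_neg, Prod.neg_mk]

lemma resPh_sub (a b : ZMod (s * H) × ZMod (s * W)) :
    resPh s (a - b) = resPh s a - resPh s b := by
  rw [sub_eq_add_neg, resPh_add, resPh_neg, ← sub_eq_add_neg]

variable [NeZero (s * H)] [NeZero (s * W)]

lemma polyNorm_cshift2 (X : ZMod (s * H) × ZMod (s * W) → EuclideanSpace ℝ (Fin C))
    (uv : ZMod (s * H) × ZMod (s * W)) (pq : ZMod s × ZMod s) :
    polyNorm s (cshift2 uv X) pq = polyNorm s X (pq - resPh s uv) := by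
  refine Fintype.sum_equiv (Equiv.subRight uv) _ _ fun ij => ?_
  simp only [Equiv.subRight_apply, resPh_sub, sub_left_inj]
  rfl

variable {s} {X : ZMod (s * H) × ZMod (s * W) → EuclideanSpace ℝ (Fin C)}

lemma anchorPhase_eq_of_polyNorm_lt {pq : ZMod s × ZMod s}
    (hpq : ∀ pq', pq' ≠ pq → polyNorm s X pq' < polyNorm s X pq) :
    anchorPhase s X = ((pq.1.val : ZMod (s * H)), (pq.2.val : ZMod (s * W))) := by
  have hX : HasUniqueMaxPhase s X := ⟨pq, hpq⟩
  have hchoose : hX.choose = pq := by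
    by_contra hne
    exact lt_asymm (hpq _ hne) (hX.choose_spec pq fun h => hne h.symm)
  rw [anchorPhase, dif_pos hX, hchoose]

lemma resPh_anchorPhase_of_polyNorm_lt [NeZero s] {pq : ZMod s × ZMod s}
    (hpq : ∀ pq', pq' ≠ pq → polyNorm s X pq' < polyNorm s X pq) :
    resPh s (anchorPhase s X) = pq := by
  simp only [anchorPhase_eq_of_polyNorm_lt hpq, resPh, map_natCast, ZMod.natCast_zmod_val]

lemma resPh_anchorPhase_cshift2 [NeZero s] (hX : HasUniqueMaxPhase s X)
    (uv : ZMod (s * H) × ZMod (s * W)) :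
    resPh s (anchorPhase s (cshift2 uv X)) = resPh s (anchorPhase s X) + resPh s uv := by
  obtain ⟨pq, hpq⟩ := hX
  have hshift : ∀ pq', pq' ≠ pq + resPh s uv →
      polyNorm s (cshift2 uv X) pq' < polyNorm s (cshift2 uv X) (pq + resPh s uv) := by
    intro pq' hne
    rw [polyNorm_cshift2, polyNorm_cshift2, add_sub_cancel_right]
    exact hpq _ fun h => hne (by rw [← h, sub_add_cancel])
  rw [resPh_anchorPhase_of_polyNorm_lt hshift, resPh_anchorPhase_of_polyNorm_lt hpq]

lemma polyAnchor_cshift2 (uv : ZMod (s * H) × ZMod (s * W)) :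
    polyAnchor s (cshift2 uv X) =
      cshift2 (uv + anchorPhase s X - anchorPhase s (cshift2 uv X)) (polyAnchor s X) := by
  change cshift2 (-_) _ = cshift2 _ (cshift2 (-_) _)
  rw [cshift2_cshift2, cshift2_cshift2]
  congr 1
  abel

lemma exists_resPh_eq_zero_polyAnchor_cshift2 [NeZero s] (hX : HasUniqueMaxPhase s X)
    (uv : ZMod (s * H) × ZMod (s * W)) :
    ∃ w, resPh s w = 0 ∧ polyAnchor s (cshift2 uv X) = cshift2 w (polyAnchor s X) := by
  refine ⟨_, ?_, polyAnchor_cshift2 uv⟩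
  rw [resPh_sub, resPh_add, resPh_anchorPhase_cshift2 hX]
  abel

end Phase

section Attention

variable {s H W d dk dv : ℕ} [NeZero H] [NeZero W] [NeZero (s * H)] [NeZero (s * W)]

lemma subsample_cshift2_iotaS {m : ℕ}
    (Φ : ZMod (s * H) × ZMod (s * W) → Matrix (Fin d) (Fin m) ℝ)
    (Y : ZMod (s * H) × ZMod (s * W) → (Fin d → ℝ)) (ab : ZMod H × ZMod W) :
    subsample s Φ (cshift2 (iotaS s ab.1, iotaS s ab.2) Y) =
      subsample s Φ Y ∘ Equiv.subRight ab := by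
  funext kl
  refine Finset.sum_congr rfl fun x _ => ?_
  simp only [cshift2, Equiv.subRight_apply, Prod.fst_sub, Prod.snd_sub,
    iotaS_sub, sub_add_eq_add_sub]

lemma gsAttn_cshift2_iotaS (Wq : Matrix (Fin d) (Fin dk) ℝ)
    (ΦK : ZMod (s * H) × ZMod (s * W) → Matrix (Fin d) (Fin dk) ℝ)
    (ΦV : ZMod (s * H) × ZMod (s * W) → Matrix (Fin d) (Fin dv) ℝ)
    (Y : ZMod (s * H) × ZMod (s * W) → (Fin d → ℝ)) (ab : ZMod H × ZMod W) :
    gsAttn s Wq ΦK ΦV (cshift2 (iotaS s ab.1, iotaS s ab.2) Y) =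
      cshift2 (iotaS s ab.1, iotaS s ab.2) (gsAttn s Wq ΦK ΦV Y) := by
  funext ij
  simp only [gsAttn, subsample_cshift2_iotaS]
  exact Fintype.sum_equiv (Equiv.subRight ab) _ _ fun kl => by
    rw [← softmax_comp_equiv]
    rfl

lemma gsAttn_cshift2_of_resPh_eq_zero (Wq : Matrix (Fin d) (Fin dk) ℝ)
    (ΦK : ZMod (s * H) × ZMod (s * W) → Matrix (Fin d) (Fin dk) ℝ)
    (ΦV : ZMod (s * H) × ZMod (s * W) → Matrix (Fin d) (Fin dv) ℝ)
    (Y : ZMod (s * H) × ZMod (s * W) → (Fin d → ℝ)) {w : ZMod (s * H) × ZMod (s * W)}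
    (hw : resPh s w = 0) :
    gsAttn s Wq ΦK ΦV (cshift2 w Y) = cshift2 w (gsAttn s Wq ΦK ΦV Y) := by
  obtain ⟨a, ha⟩ := exists_iotaS_eq_of_cast_eq_zero s (congrArg Prod.fst hw)
  obtain ⟨b, hb⟩ := exists_iotaS_eq_of_cast_eq_zero s (congrArg Prod.snd hw)
  obtain rfl : (iotaS s a, iotaS s b) = w := Prod.ext ha hb
  exact gsAttn_cshift2_iotaS Wq ΦK ΦV Y (a, b)

end Attention

theorem polyAnchor_gsAttn_general_shift_equivariant_general
    (s H W d dk dv : ℕ) [NeZero s] [NeZero H] [NeZero W]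
    (Wq : Matrix (Fin d) (Fin dk) ℝ)
    (ΦK : ZMod (s * H) × ZMod (s * W) → Matrix (Fin d) (Fin dk) ℝ)
    (ΦV : ZMod (s * H) × ZMod (s * W) → Matrix (Fin d) (Fin dv) ℝ)
    (X : ZMod (s * H) × ZMod (s * W) → EuclideanSpace ℝ (Fin d))
    (hX : HasUniqueMaxPhase s X)
    (uv : ZMod (s * H) × ZMod (s * W)) :
    ∃ u'v' : ZMod (s * H) × ZMod (s * W),
      gsAttn s Wq ΦK ΦV (fun ij => WithLp.ofLp (polyAnchor s (cshift2 uv X) ij)) =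
        cshift2 u'v' (gsAttn s Wq ΦK ΦV (fun ij => WithLp.ofLp (polyAnchor s X ij))) := by
  obtain ⟨w, hw, hanchor⟩ := exists_resPh_eq_zero_polyAnchor_cshift2 hX uv
  refine ⟨w, ?_⟩
  rw [hanchor]
  exact gsAttn_cshift2_of_resPh_eq_zero Wq ΦK ΦV (fun ij => WithLp.ofLp (polyAnchor s X ij)) hw

/-- (Lemma 4) The composition of polyphase anchoring with global subsampled attention is
general shift-equivariant: `A_g (P (shift_{(u,v)} X)) = shift_{(u',v')} (A_g (P X))`
for some shift `(u',v')`. -/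
theorem polyAnchor_gsAttn_general_shift_equivariant
    (s H W d dk dv : ℕ) [NeZero s] [NeZero H] [NeZero W]
    (hs : 1 ≤ s) (hH : 1 ≤ H) (hW : 1 ≤ W) (hd : 1 ≤ d) (hdk : 1 ≤ dk) (hdv : 1 ≤ dv)
    (Wq : Matrix (Fin d) (Fin dk) ℝ)
    (ΦK : ZMod (s * H) × ZMod (s * W) → Matrix (Fin d) (Fin dk) ℝ)
    (ΦV : ZMod (s * H) × ZMod (s * W) → Matrix (Fin d) (Fin dv) ℝ)
    (X : ZMod (s * H) × ZMod (s * W) → EuclideanSpace ℝ (Fin d))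
    (hX : HasUniqueMaxPhase s X)
    (uv : ZMod (s * H) × ZMod (s * W)) :
    ∃ u'v' : ZMod (s * H) × ZMod (s * W),
      gsAttn s Wq ΦK ΦV (fun ij => WithLp.ofLp (polyAnchor s (cshift2 uv X) ij)) =
        cshift2 u'v' (gsAttn s Wq ΦK ΦV (fun ij => WithLp.ofLp (polyAnchor s X ij))) :=
  polyAnchor_gsAttn_general_shift_equivariant_general s H W d dk dv Wq ΦK ΦV X hX uv
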